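/- If $\phi:X\to(-\infty,+\infty]$ is approximately $\lambda$-convex, then for every $x\in X$ the metric slope equals the global $\lambda$-slope: $|\partial\phi|(x)=|\partial^\lambda\phi|(x)$. -/

import Mathlib

open Filter in
/-- The metric slope `|∂φ|(x)` of an extended-real functional. -/
noncomputable def metricSlope {X : Type*} [MetricSpace X] (φ : X → EReal) (x : X) : EReal :=
  if φ x = ⊤ then ⊤ else
    max 0 (Filter.limsup (fun y => (max (φ x - φ y) 0) / ((dist x y : ℝ) : EReal))
      (nhdsWithin x {x}ᶜ))

/-- The global `λ`-slope `|∂^λ φ|(x)`. -/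
noncomputable def globalSlope {X : Type*} [MetricSpace X] (φ : X → EReal) (lam : ℝ) (x : X) :
    EReal :=
  if φ x = ⊤ then ⊤ else
    max 0 (⨆ y ∈ {y : X | y ≠ x},
      (max (φ x - φ y + ((lam / 2 * dist x y ^ 2 : ℝ) : EReal)) 0) / ((dist x y : ℝ) : EReal))

/-- `x` is a `(θ, ε)`-intermediate point between `x₀` and `x₁`. -/
def IsIntermediatePt {X : Type*} [MetricSpace X] (x₀ x₁ x : X) (θ ε : ℝ) : Prop :=
  dist x₀ x ^ 2 / θ + dist x x₁ ^ 2 / (1 - θ) ≤ dist x₀ x₁ ^ 2 * (1 + ε ^ 2 * θ * (1 - θ))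

/-- `φ` is approximately `λ`-convex in `D`. -/
noncomputable def ApproxLambdaConvexOn {X : Type*} [MetricSpace X]
    (φ : X → EReal) (lam : ℝ) (D : Set X) : Prop :=
  ∀ x₀ ∈ D, ∀ x₁ ∈ D, φ x₀ ≠ ⊤ → φ x₁ ≠ ⊤ →
    ∀ θ ∈ Set.Ioo (0:ℝ) 1, ∀ ε ∈ Set.Ioo (0:ℝ) 1, ∃ x ∈ D,
      IsIntermediatePt x₀ x₁ x θ ε ∧
      φ x ≤ (((1 - θ : ℝ)) : EReal) * φ x₀ + ((θ : ℝ) : EReal) * φ x₁ -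
        (((lam - ε) / 2 * (θ * (1 - θ)) * dist x₀ x₁ ^ 2 : ℝ) : EReal)

/-!
Near `x` the correction `λ/2 · d(x,y)²` is `o(d(x,y))`, so difference quotients close to `x`
are at most the global `λ`-slope plus a vanishing error: `|∂φ|(x) ≤ |∂^λ φ|(x)`.
Conversely, for `y ≠ x` and small `θ`, approximate `λ`-convexity with `ε = θ` gives a point
`w_θ` at distance `≈ θ d(x,y)` from `x` with
`φ(w_θ) ≤ φ(x) - θ (φ(x) - φ(y) + (λ - θ)(1 - θ) d(x,y)² / 2)`, so the difference quotients at
`w_θ → x` are asymptotically at least `(φ(x) - φ(y) + λ/2 · d(x,y)²) / d(x,y)`.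
-/

open Filter Topology Set

theorem Filter.Tendsto.le_limsup_of_le_comp {α β γ : Type*} [CompleteLinearOrder γ]
    [TopologicalSpace γ] [OrderTopology γ] {l : Filter α} [l.NeBot] {l' : Filter β}
    {w : α → β} {u : β → γ} {h : α → γ} {c : γ} (hw : Tendsto w l l')
    (hh : Tendsto h l (𝓝 c)) (hle : h ≤ᶠ[l] u ∘ w) : c ≤ limsup u l' :=
  calc c = limsup h l := hh.limsup_eq.symm
    _ ≤ limsup (u ∘ w) l := limsup_le_limsup hle
    _ ≤ limsup u l' := hw.limsup_comp_le_limsup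

@[norm_cast]
theorem EReal.coe_max (a b : ℝ) : ((max a b : ℝ) : EReal) = max (a : EReal) b :=
  EReal.coe_strictMono.monotone.map_max

theorem EReal.max_zero_le_max_add_zero_add_abs (a : EReal) (e : ℝ) :
    max a 0 ≤ max (a + e) 0 + (|e| : ℝ) := by
  induction a using EReal.rec with
  | bot => simp
  | top => simp
  | coe r =>
    norm_cast
    rcases le_total r 0 with h | h
    · rw [max_eq_right h]; positivity
    · rw [max_eq_left h]; linarith [le_max_left (r + e) 0, neg_abs_le e]

section
variable {X : Type*} [MetricSpace X] {x₀ x₁ x : X} {θ ε : ℝ}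

theorem IsIntermediatePt.abs_sub_le (hθ : θ ∈ Ioo 0 1) (hε : 0 ≤ ε)
    (h : IsIntermediatePt x₀ x₁ x θ ε) :
    |(1 - θ) * dist x₀ x - θ * dist x x₁| ≤ ε * θ * (1 - θ) * dist x₀ x₁ := by
  unfold IsIntermediatePt at h
  obtain ⟨hθ0, hθ1⟩ := hθ
  have h1θ : 0 < 1 - θ := by linarith
  have htri : dist x₀ x₁ ≤ dist x₀ x + dist x x₁ := dist_triangle _ _ _
  have hsq : θ * (1 - θ) * dist x₀ x₁ ^ 2 ≤ θ * (1 - θ) * (dist x₀ x + dist x x₁) ^ 2 := by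
    gcongr
  have hmul : (1 - θ) * dist x₀ x ^ 2 + θ * dist x x₁ ^ 2 ≤
      θ * (1 - θ) * (dist x₀ x₁ ^ 2 * (1 + ε ^ 2 * θ * (1 - θ))) := by
    calc (1 - θ) * dist x₀ x ^ 2 + θ * dist x x₁ ^ 2
        = θ * (1 - θ) * (dist x₀ x ^ 2 / θ + dist x x₁ ^ 2 / (1 - θ)) := by
          field_simp
      _ ≤ _ := by gcongr
  refine abs_le_of_sq_le_sq ?_ (by positivity)
  nlinarith

theorem IsIntermediatePt.le_dist (hθ : θ ∈ Ioo 0 1) (hε : 0 ≤ ε)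
    (h : IsIntermediatePt x₀ x₁ x θ ε) :
    θ * (1 - ε * (1 - θ)) * dist x₀ x₁ ≤ dist x₀ x := by
  have := (abs_le.1 (h.abs_sub_le hθ hε)).1
  nlinarith [mul_le_mul_of_nonneg_left (dist_triangle x₀ x x₁) hθ.1.le]

theorem IsIntermediatePt.dist_mul_le (hθ : θ ∈ Ioo 0 1) (hε : 0 ≤ ε)
    (h : IsIntermediatePt x₀ x₁ x θ ε) :
    dist x₀ x * (1 - 2 * θ) ≤ θ * (1 + ε * (1 - θ)) * dist x₀ x₁ := by
  have := (abs_le.1 (h.abs_sub_le hθ hε)).2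
  have htri : dist x x₁ ≤ dist x₀ x + dist x₀ x₁ := dist_comm x x₀ ▸ dist_triangle x x₀ x₁
  nlinarith [mul_le_mul_of_nonneg_left htri hθ.1.le]

end

section
variable {X : Type*} [MetricSpace X] (φ : X → EReal) (lam : ℝ)

noncomputable def slopeQuot (x y : X) : EReal :=
  max (φ x - φ y) 0 / ((dist x y : ℝ) : EReal)

noncomputable def lamSlopeQuot (x y : X) : EReal :=
  max (φ x - φ y + ((lam / 2 * dist x y ^ 2 : ℝ) : EReal)) 0 / ((dist x y : ℝ) : EReal)

variable {x y : X}

theorem metricSlope_of_ne_top (hx : φ x ≠ ⊤) :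
    metricSlope φ x = max 0 (limsup (slopeQuot φ x) (𝓝[≠] x)) :=
  if_neg hx

theorem globalSlope_of_ne_top (hx : φ x ≠ ⊤) :
    globalSlope φ lam x = max 0 (⨆ y ∈ {y | y ≠ x}, lamSlopeQuot φ lam x y) :=
  if_neg hx

theorem slopeQuot_le_lamSlopeQuot_add (hxy : x ≠ y) :
    slopeQuot φ x y ≤ lamSlopeQuot φ lam x y + ((|lam| / 2 * dist x y : ℝ) : EReal) := by
  have hd : 0 < dist x y := dist_pos.2 hxy
  have habs : |lam| / 2 * dist x y = |lam / 2 * dist x y ^ 2| / dist x y := by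
    rw [abs_mul, abs_div, abs_two, abs_of_nonneg (sq_nonneg (dist x y))]
    field_simp
  rw [slopeQuot, lamSlopeQuot, habs, EReal.coe_div,
    ← EReal.add_div_of_nonneg_right (EReal.coe_nonneg.2 hd.le)]
  exact EReal.div_le_div_right_of_nonneg (EReal.coe_nonneg.2 hd.le)
    (EReal.max_zero_le_max_add_zero_add_abs _ _)

theorem limsup_slopeQuot_le :
    limsup (slopeQuot φ x) (𝓝[≠] x) ≤ max 0 (⨆ y ∈ {y | y ≠ x}, lamSlopeQuot φ lam x y) := by
  set M := max 0 (⨆ y ∈ {y | y ≠ x}, lamSlopeQuot φ lam x y)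
  refine EReal.le_of_forall_lt_iff_le.1 fun z hz => ?_
  have hM : (M.toReal : EReal) = M :=
    EReal.coe_toReal hz.ne_top (ne_bot_of_le_ne_bot EReal.zero_ne_bot (le_max_left _ _))
  have hsmall : ∀ᶠ y in 𝓝[≠] x, M.toReal + |lam| / 2 * dist x y < z := by
    have : Tendsto (fun y => M.toReal + |lam| / 2 * dist x y) (𝓝[≠] x) (𝓝 M.toReal) := by
      have : Tendsto (dist x) (𝓝[≠] x) (𝓝 0) := tendsto_nhdsWithin_of_tendsto_nhds
        (by simpa using (tendsto_const_nhds (x := x)).dist (tendsto_id (x := 𝓝 x)))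
      simpa using (this.const_mul (|lam| / 2)).const_add M.toReal
    exact this.eventually (eventually_lt_nhds (by rw [← EReal.coe_lt_coe_iff, hM]; exact hz))
  refine limsup_le_of_le (by isBoundedDefault) ?_
  filter_upwards [hsmall, self_mem_nhdsWithin] with y hy hyx
  calc slopeQuot φ x y
      ≤ lamSlopeQuot φ lam x y + ((|lam| / 2 * dist x y : ℝ) : EReal) :=
        slopeQuot_le_lamSlopeQuot_add φ lam (Ne.symm hyx)
    _ ≤ M + ((|lam| / 2 * dist x y : ℝ) : EReal) := by
        gcongr
        exact le_max_of_le_right (le_biSup _ hyx)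
    _ ≤ z := by rw [← hM]; exact_mod_cast hy.le

end

section
variable {X : Type*} [MetricSpace X] {φ : X → EReal} {lam : ℝ} {x y : X}

theorem tendsto_nhdsNE_of_isIntermediatePt (hxy : x ≠ y) {w : ℝ → X}
    (hw : ∀ᶠ θ in 𝓝[>] 0, IsIntermediatePt x y (w θ) θ θ) :
    Tendsto w (𝓝[>] 0) (𝓝[≠] x) := by
  have hd : 0 < dist x y := dist_pos.2 hxy
  have hθ : ∀ᶠ θ : ℝ in 𝓝[>] 0, θ ∈ Ioo 0 (1 / 2) := Ioo_mem_nhdsGT (by norm_num)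
  have hU : Tendsto (fun θ : ℝ => θ * (1 + θ * (1 - θ)) * dist x y / (1 - 2 * θ))
      (𝓝[>] 0) (𝓝 0) := by
    refine tendsto_nhdsWithin_of_tendsto_nhds ?_
    have : ContinuousAt (fun θ : ℝ => θ * (1 + θ * (1 - θ)) * dist x y / (1 - 2 * θ)) 0 :=
      ContinuousAt.div (by fun_prop) (by fun_prop) (by norm_num)
    simpa using this.tendsto
  refine tendsto_nhdsWithin_iff.2 ⟨tendsto_iff_dist_tendsto_zero.2 ?_, ?_⟩
  · refine squeeze_zero' (Eventually.of_forall fun _ => dist_nonneg) ?_ hU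
    filter_upwards [hw, hθ] with θ hIP ⟨hθ0, hθ1⟩
    rw [dist_comm, le_div_iff₀ (by linarith)]
    exact hIP.dist_mul_le ⟨hθ0, by linarith⟩ hθ0.le
  · filter_upwards [hw, hθ] with θ hIP ⟨hθ0, hθ1⟩
    have hpos : 0 < θ * (1 - θ * (1 - θ)) * dist x y := by
      have : 0 < 1 - θ * (1 - θ) := by nlinarith
      positivity
    exact (dist_pos.1 (hpos.trans_le (hIP.le_dist ⟨hθ0, by linarith⟩ hθ0.le))).symm

theorem ApproxLambdaConvexOn.exists_tendsto_intermediatePt (hconv : ApproxLambdaConvexOn φ lam univ)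
    {p q : ℝ} (hx : φ x = p) (hy : φ y = q) (hxy : x ≠ y) :
    ∃ w : ℝ → X, Tendsto w (𝓝[>] 0) (𝓝[≠] x) ∧ ∀ᶠ θ in 𝓝[>] 0,
      IsIntermediatePt x y (w θ) θ θ ∧
      φ (w θ) ≤ ((p - θ * (p - q + (lam - θ) * (1 - θ) * dist x y ^ 2 / 2) : ℝ) : EReal) := by
  have hpt : ∀ θ : ℝ, ∃ w, θ ∈ Ioo 0 1 → IsIntermediatePt x y w θ θ ∧
      φ w ≤ ((p - θ * (p - q + (lam - θ) * (1 - θ) * dist x y ^ 2 / 2) : ℝ) : EReal) := by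
    intro θ
    by_cases hθ : θ ∈ Ioo 0 1
    · obtain ⟨w, -, hIP, hφw⟩ := hconv x trivial y trivial (hx ▸ EReal.coe_ne_top p)
        (hy ▸ EReal.coe_ne_top q) θ hθ θ hθ
      rw [hx, hy] at hφw
      refine ⟨w, fun _ => ⟨hIP, hφw.trans_eq ?_⟩⟩
      norm_cast
      ring
    · exact ⟨x, fun h => absurd h hθ⟩
  choose w hw using hpt
  have hθ : ∀ᶠ θ : ℝ in 𝓝[>] 0, θ ∈ Ioo 0 1 := Ioo_mem_nhdsGT one_pos
  have hw' := hθ.mono hw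
  exact ⟨w, tendsto_nhdsNE_of_isIntermediatePt hxy (hw'.mono fun _ h => h.1), hw'⟩


theorem lamSlopeQuot_le_limsup_slopeQuot (hconv : ApproxLambdaConvexOn φ lam univ)
    {p q : ℝ} (hx : φ x = p) (hy : φ y = q) (hxy : x ≠ y) :
    lamSlopeQuot φ lam x y ≤ limsup (slopeQuot φ x) (𝓝[≠] x) := by
  obtain ⟨w, hw, hwθ⟩ := hconv.exists_tendsto_intermediatePt hx hy hxy
  set d := dist x y
  have hd : 0 < d := dist_pos.2 hxy
  set N : ℝ → ℝ := fun θ => p - q + (lam - θ) * (1 - θ) * d ^ 2 / 2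
  -- `dist x (w θ) ≈ θ d` turns the decrease `θ N θ` into a quotient `≈ N θ / d`.
  set H : ℝ → ℝ := fun θ => max (N θ) 0 * (1 - 2 * θ) / ((1 + θ * (1 - θ)) * d)
  have hH : Tendsto (fun θ => (H θ : EReal)) (𝓝[>] 0) (𝓝 (lamSlopeQuot φ lam x y)) := by
    have hH0 : H 0 = max (p - q + lam / 2 * d ^ 2) 0 / d := by
      simp only [H, N]
      ring_nf
    have hcont : ContinuousAt H 0 :=
      ContinuousAt.div (by fun_prop) (by fun_prop) (by simpa using hd.ne')
    rw [lamSlopeQuot, hx, hy]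
    convert EReal.tendsto_coe.2 (tendsto_nhdsWithin_of_tendsto_nhds hcont.tendsto)
    rw [hH0]
    norm_cast
  refine hw.le_limsup_of_le_comp hH ?_
  filter_upwards [hwθ, Ioo_mem_nhdsGT (by norm_num : (0 : ℝ) < 1 / 2)] with θ ⟨hIP, hφw⟩ hθ
  obtain ⟨hθ0, hθ1⟩ := hθ
  have hIoo : θ ∈ Ioo 0 1 := ⟨hθ0, by linarith⟩
  have ha : 0 < dist x (w θ) := by
    have : 0 < 1 - θ * (1 - θ) := by nlinarith
    exact lt_of_lt_of_le (by positivity) (hIP.le_dist hIoo hθ0.le)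
  have hden : 0 < (1 + θ * (1 - θ)) * d := by
    have : 0 < 1 + θ * (1 - θ) := by nlinarith
    positivity
  have hHθ : H θ ≤ max (θ * N θ) 0 / dist x (w θ) := by
    have hmax : max (θ * N θ) 0 = θ * max (N θ) 0 := by
      rw [mul_max_of_nonneg _ _ hθ0.le, mul_zero]
    rw [hmax, div_le_div_iff₀ hden ha]
    nlinarith [mul_le_mul_of_nonneg_left (hIP.dist_mul_le hIoo hθ0.le) (le_max_right (N θ) 0)]
  calc (H θ : EReal)
      ≤ ((max (p - (p - θ * N θ)) 0 / dist x (w θ) : ℝ) : EReal) := by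
        rw [sub_sub_cancel]
        exact_mod_cast hHθ
    _ ≤ slopeQuot φ x (w θ) := by
        rw [slopeQuot, hx, EReal.coe_div, EReal.coe_max, EReal.coe_sub, EReal.coe_zero]
        exact EReal.div_le_div_right_of_nonneg (EReal.coe_nonneg.2 dist_nonneg)
          (max_le_max (EReal.sub_le_sub le_rfl hφw) le_rfl)

end

theorem stmt7 {X : Type*} [MetricSpace X] (φ : X → EReal) (lam : ℝ)
    (hbot : ∀ y, φ y ≠ ⊥)
    (hconv : ApproxLambdaConvexOn φ lam Set.univ) :
    ∀ x : X, metricSlope φ x = globalSlope φ lam x := by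
  intro x
  by_cases hx : φ x = ⊤
  · rw [metricSlope, globalSlope, if_pos hx, if_pos hx]
  rw [metricSlope_of_ne_top φ hx, globalSlope_of_ne_top φ lam hx]
  refine le_antisymm (max_le (le_max_left _ _) (limsup_slopeQuot_le φ lam)) ?_
  refine max_le (le_max_left _ _) (iSup₂_le fun y hyx => ?_)
  by_cases hy : φ y = ⊤
  · simp [lamSlopeQuot, hy]
  exact le_max_of_le_right (lamSlopeQuot_le_limsup_slopeQuot hconv
    (EReal.coe_toReal hx (hbot x)).symm (EReal.coe_toReal hy (hbot y)).symm (Ne.symm hyx))
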